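/- arXiv:2006.00587 — 6 statements merged into one kernel-verified Lean document; each statement's English description precedes it below -/
import Mathlib

section
/- Let n, m be positive integers and let A be the m^n × mn binary 'm-ary encoding' matrix whose row indexed by the m-ary string ā = a_0 a_1 … a_{n−1} (a_u ∈ {0,…,m−1}) has a 1 in column u·m + v exactly when a_u = v, and 0 otherwise. Let p: {0,…,m−1}^n → (0,1) be a product distribution, p(ā) = ∏_{u=0}^{n−1} p_u(a_u), with each p_u a strictly positive probability vector on {0,…,m−1}. Define A^p = diag(√p) · A. Then the matrix M ∈ ℝ^{mn × m^n} with entries M_{um+v, ā} = √(p(ā_{−u})/p_u(a_u)) · 1[a_u = v] − ((n−1)/n) √(p(ā)) − (1/m) √(p(ā_{−u})/p_u(a_u)) + (1/(mn)) Σ_{u'=0}^{n−1} √(p(ā_{−u'})/p_{u'}(a_{u'})), where p(ā_{−u}) = ∏_{u'≠u} p_{u'}(a_{u'}), is the Moore–Penrose pseudoinverse of A^p; that is, A^p M and M A^p are symmetric, A^p M A^p = A^p, and M A^p M = M. -/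
/-!
Write `s a = √(p a)`. Since `√(p(ā₋ᵤ) / pᵤ(aᵤ)) = s ā / pᵤ(aᵤ)`, every column of `M` is `s ā`
times an explicit combination of `1 / pᵤ(aᵤ)`, `[aᵤ = v] / pᵤ(aᵤ)` and constants. Hence
`A^p M` is `s a · s b · (∑ᵤ [aᵤ = bᵤ] / pᵤ(aᵤ) - (n - 1))`, which is symmetric, while `M A^p`
is a sum over `ā`, against the product distribution, of functions of at most two coordinates;
by independence it equals `Q = I - Π`, where `Π` is the orthogonal projection onto `ker A`.
Finally `Q X = X` whenever the block column sums `∑ᵥ X (u, v) b` do not depend on `u`; both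
`(A^p)ᵀ` and `M` have this property, which gives `A^p M A^p = A^p` and `M A^p M = M`.
-/

open Matrix Finset

def Matrix.IsMoorePenroseInverse {m n : Type*} [Fintype m] [Fintype n]
    (A : Matrix m n ℝ) (B : Matrix n m ℝ) : Prop :=
  (A * B).IsSymm ∧ (B * A).IsSymm ∧ A * B * A = A ∧ B * A * B = B

theorem sqrt_prod_erase_div {ι : Type*} [Fintype ι] [DecidableEq ι] (f : ι → ℝ) {u : ι}
    (hu : 0 ≤ f u) : √((∏ w ∈ univ.erase u, f w) / f u) = √(∏ w, f w) / f u := by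
  rw [← mul_prod_erase univ f (mem_univ u)]
  calc √((∏ w ∈ univ.erase u, f w) / f u) = √(f u * (∏ w ∈ univ.erase u, f w) / f u ^ 2) := by
        rcases eq_or_ne (f u) 0 with h | h
        · simp [h]
        · field_simp
    _ = _ := by rw [Real.sqrt_div', Real.sqrt_sq hu]; positivity

variable {ι κ : Type*} [Fintype ι] [Fintype κ]

section ProductDistribution

variable [DecidableEq ι]

theorem sum_prod_mul_prod (p c : ι → κ → ℝ) :
    ∑ a : ι → κ, (∏ w, p w (a w)) * ∏ w, c w (a w) = ∏ w, ∑ v, p w v * c w v := by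
  simp only [← prod_mul_distrib, Fintype.prod_sum]

theorem sum_prod_mul_apply {p : ι → κ → ℝ} (hp : ∀ u, ∑ v, p u v = 1) (u : ι) (g : κ → ℝ) :
    ∑ a : ι → κ, (∏ w, p w (a w)) * g (a u) = ∑ v, p u v * g v := by
  have h := sum_prod_mul_prod p fun w v => if w = u then g v else 1
  simp only [prod_ite_eq', mem_univ, if_true] at h
  calc _ = ∏ w, if w = u then ∑ v, p u v * g v else 1 := by
        refine h.trans (prod_congr rfl fun w _ => ?_)
        split_ifs with hw
        · rw [hw]
        · simp [hp]
    _ = _ := by simp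

theorem sum_prod_mul_apply_mul_apply {p : ι → κ → ℝ} (hp : ∀ u, ∑ v, p u v = 1) {u u' : ι}
    (huu' : u ≠ u') (f g : κ → ℝ) :
    ∑ a : ι → κ, (∏ w, p w (a w)) * (f (a u) * g (a u')) =
      (∑ v, p u v * f v) * ∑ v, p u' v * g v := by
  have h := sum_prod_mul_prod p fun w v =>
    (if w = u then f v else 1) * (if w = u' then g v else 1)
  simp only [prod_mul_distrib, prod_ite_eq', mem_univ, if_true] at h
  calc _ = ∏ w, (if w = u then ∑ v, p u v * f v else 1) *
        (if w = u' then ∑ v, p u' v * g v else 1) := by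
        refine h.trans (prod_congr rfl fun w _ => ?_)
        by_cases hwu : w = u
        · subst hwu; simp [huu']
        by_cases hwu' : w = u'
        · subst hwu'; simp [hwu]
        · simp [hwu, hwu', hp]
    _ = _ := by
        rw [prod_mul_distrib, prod_ite_eq', prod_ite_eq', if_pos (mem_univ _), if_pos (mem_univ _)]

theorem sum_prod_mul_div_apply_mul_apply {p : ι → κ → ℝ} (hp : ∀ u, ∑ v, p u v = 1)
    (hp0 : ∀ u v, p u v ≠ 0) (u u' : ι) (h g : κ → ℝ) :
    ∑ a : ι → κ, (∏ w, p w (a w)) * (h (a u) / p u (a u) * g (a u')) =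
      if u = u' then ∑ v, h v * g v else (∑ v, h v) * ∑ v, p u' v * g v := by
  split_ifs with huu'
  · subst huu'
    rw [sum_prod_mul_apply hp u fun v => h v / p u v * g v]
    exact sum_congr rfl fun v _ => by field_simp [hp0 u v]
  · rw [sum_prod_mul_apply_mul_apply hp huu' (fun v => h v / p u v)]
    congr 1
    exact sum_congr rfl fun v _ => by field_simp [hp0 u v]

theorem sum_sum_prod_mul_inv_apply {p : ι → κ → ℝ} (hp : ∀ u, ∑ v, p u v = 1)
    (hp0 : ∀ u v, p u v ≠ 0) (u' : ι) (g : κ → ℝ) :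
    ∑ w, ∑ a : ι → κ, (∏ w, p w (a w)) * (1 / p w (a w) * g (a u')) =
      ∑ v, g v + (Fintype.card ι - 1) * (Fintype.card κ * ∑ v, p u' v * g v) := by
  simp only [sum_prod_mul_div_apply_mul_apply hp hp0 _ u' (fun _ => 1) g, one_mul, sum_const,
    card_univ, nsmul_eq_mul, mul_one]
  rw [← add_sum_erase _ _ (mem_univ u'), if_pos rfl,
    sum_congr rfl fun w hw => if_neg (ne_of_mem_erase hw), sum_const,
    card_erase_of_mem (mem_univ _), card_univ, nsmul_eq_mul,
    Nat.cast_pred (Fintype.card_pos_iff.mpr ⟨u'⟩)]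

end ProductDistribution

section Encoding

variable [DecidableEq κ]

noncomputable def weightedEncoding (p : ι → κ → ℝ) : Matrix (ι → κ) (ι × κ) ℝ :=
  of fun a x => √(∏ w, p w (a w)) * if a x.1 = x.2 then 1 else 0

noncomputable def encodingPinv (p : ι → κ → ℝ) : Matrix (ι × κ) (ι → κ) ℝ :=
  of fun x a => √(∏ w, p w (a w)) *
    (((if a x.1 = x.2 then (1 : ℝ) else 0) - 1 / Fintype.card κ) / p x.1 (a x.1)
      + 1 / (Fintype.card κ * Fintype.card ι) * ∑ w, 1 / p w (a w)
      - (Fintype.card ι - 1) / Fintype.card ι)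

theorem weightedEncoding_mul_apply {α : Type*} (p : ι → κ → ℝ) (X : Matrix (ι × κ) α ℝ)
    (a : ι → κ) (b : α) :
    (weightedEncoding p * X) a b = √(∏ w, p w (a w)) * ∑ u, X (u, a u) b := by
  simp [weightedEncoding, mul_apply, Fintype.sum_prod_type, mul_sum]

theorem weightedEncoding_mul_encodingPinv_apply [Nonempty ι] (p : ι → κ → ℝ) (a b : ι → κ) :
    (weightedEncoding p * encodingPinv p) a b = √(∏ w, p w (a w)) * √(∏ w, p w (b w)) *
      (∑ u, (if a u = b u then 1 / p u (a u) else 0) - (Fintype.card ι - 1)) := by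
  have hdiag : ∀ u, (if b u = a u then (1 : ℝ) else 0) / p u (b u) =
      if a u = b u then 1 / p u (a u) else 0 := fun u => by
    by_cases h : a u = b u <;> simp [h, eq_comm]
  have hmean : ∑ u, 1 / (Fintype.card κ : ℝ) / p u (b u) =
      1 / Fintype.card κ * ∑ u, 1 / p u (b u) := by
    rw [mul_sum]; exact sum_congr rfl fun u _ => by ring
  simp only [weightedEncoding_mul_apply, encodingPinv, of_apply, ← mul_sum, sub_div,
    sum_add_distrib, sum_sub_distrib, hdiag, hmean, sum_const, card_univ, nsmul_eq_mul]
  field_simp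
  ring

theorem weightedEncoding_mul_encodingPinv_isSymm [Nonempty ι] (p : ι → κ → ℝ) :
    (weightedEncoding p * encodingPinv p).IsSymm := by
  ext a b
  rw [transpose_apply, weightedEncoding_mul_encodingPinv_apply,
    weightedEncoding_mul_encodingPinv_apply]
  have hswap : ∀ u, (if b u = a u then 1 / p u (b u) else 0) =
      if a u = b u then 1 / p u (a u) else 0 := fun u => by
    by_cases h : a u = b u <;> simp [h, eq_comm]
  simp only [hswap]
  ring

theorem encodingPinv_apply_mul_weightedEncoding_apply {p : ι → κ → ℝ}
    (hp_nonneg : ∀ u v, 0 ≤ p u v) (u u' : ι) (v v' : κ) (a : ι → κ) :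
    encodingPinv p (u, v) a * weightedEncoding p a (u', v') =
      (∏ w, p w (a w)) * (((if a u = v then 1 else 0) - 1 / Fintype.card κ) / p u (a u) *
          (if a u' = v' then 1 else 0))
        + 1 / (Fintype.card κ * Fintype.card ι) *
          ∑ w, (∏ w, p w (a w)) * (1 / p w (a w) * (if a u' = v' then 1 else 0))
        - (Fintype.card ι - 1) / Fintype.card ι *
          ((∏ w, p w (a w)) * (if a u' = v' then 1 else 0)) := by
  have hsq := Real.mul_self_sqrt (prod_nonneg (s := univ) fun w _ => hp_nonneg w (a w))
  simp only [encodingPinv, weightedEncoding, of_apply, ← mul_sum, ← sum_mul]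
  rw [mul_mul_mul_comm, hsq]
  ring

variable [DecidableEq ι]

/-- `1 - encodingProj` is the orthogonal projection onto the kernel
`{x | x (u, v) = c u with ∑ u, c u = 0}` of the encoding matrix. -/
noncomputable def encodingProj (ι κ : Type*) [Fintype ι] [DecidableEq ι] [Fintype κ]
    [DecidableEq κ] : Matrix (ι × κ) (ι × κ) ℝ :=
  of fun x y => (if x.1 = y.1 then (if x.2 = y.2 then (1 : ℝ) else 0) - 1 / Fintype.card κ else 0)
    + 1 / (Fintype.card κ * Fintype.card ι)

theorem encodingProj_isSymm : (encodingProj ι κ).IsSymm := by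
  ext x y
  simp only [encodingProj, transpose_apply, of_apply, eq_comm]

theorem encodingProj_mul_of_sum_eq [Nonempty ι] [Nonempty κ] {α : Type*}
    (X : Matrix (ι × κ) α ℝ) (hX : ∀ u u' b, ∑ v, X (u, v) b = ∑ v, X (u', v) b) :
    encodingProj ι κ * X = X := by
  ext ⟨u, v⟩ b
  have hS : ∀ u', ∑ v', X (u', v') b = ∑ v', X (u, v') b := fun u' => hX u' u b
  simp only [encodingProj, mul_apply, of_apply, Fintype.sum_prod_type, add_mul, sum_add_distrib,
    ite_mul, zero_mul, sum_ite_irrel, sum_const_zero, sum_ite_eq, mem_univ, if_true, sub_mul,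
    sum_sub_distrib, one_mul, ← mul_sum, hS, sum_const, card_univ, nsmul_eq_mul]
  field_simp
  ring

theorem weightedEncoding_mul_encodingProj [Nonempty ι] [Nonempty κ] (p : ι → κ → ℝ) :
    weightedEncoding p * encodingProj ι κ = weightedEncoding p := by
  have h := encodingProj_mul_of_sum_eq (weightedEncoding p)ᵀ fun u u' a => by
    simp [weightedEncoding, mul_ite]
  rw [← transpose_inj, transpose_mul, encodingProj_isSymm.eq, h]

theorem encodingProj_mul_encodingPinv [Nonempty ι] [Nonempty κ] (p : ι → κ → ℝ) :
    encodingProj ι κ * encodingPinv p = encodingPinv p := by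
  refine encodingProj_mul_of_sum_eq _ fun u u' b => ?_
  have key : ∀ u, ∑ v, encodingPinv p (u, v) b = √(∏ w, p w (b w)) * (Fintype.card κ *
      (1 / (Fintype.card κ * Fintype.card ι) * ∑ w, 1 / p w (b w)
        - (Fintype.card ι - 1) / Fintype.card ι)) := by
    intro u
    simp only [encodingPinv, of_apply, ← mul_sum, sum_add_distrib, sum_sub_distrib, ← sum_div,
      sum_ite_eq, sum_const, card_univ, nsmul_eq_mul, mem_univ, if_true]
    field_simp
    ring
  rw [key, key]

theorem encodingPinv_mul_weightedEncoding [Nonempty ι] [Nonempty κ] {p : ι → κ → ℝ}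
    (hp_pos : ∀ u v, 0 < p u v) (hp : ∀ u, ∑ v, p u v = 1) :
    encodingPinv p * weightedEncoding p = encodingProj ι κ := by
  ext ⟨u, v⟩ ⟨u', v'⟩
  have hp0 : ∀ u v, p u v ≠ 0 := fun u v => (hp_pos u v).ne'
  have hm : (Fintype.card κ : ℝ) ≠ 0 := Nat.cast_ne_zero.mpr Fintype.card_ne_zero
  have hn : (Fintype.card ι : ℝ) ≠ 0 := Nat.cast_ne_zero.mpr Fintype.card_ne_zero
  have hfirst : ∑ a : ι → κ, (∏ w, p w (a w)) * (((if a u = v then 1 else 0) - 1 / Fintype.card κ)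
      / p u (a u) * (if a u' = v' then 1 else 0)) =
      if u = u' then (if v = v' then (1 : ℝ) else 0) - 1 / Fintype.card κ else 0 := by
    rw [sum_prod_mul_div_apply_mul_apply hp hp0 u u'
      (fun x => (if x = v then 1 else 0) - 1 / Fintype.card κ) (fun x => if x = v' then 1 else 0)]
    split_ifs with huu' hvv'
    · simp [hvv']
    · simp [Ne.symm hvv']
    · simp [sum_sub_distrib, hm]
  have hsecond : ∑ a : ι → κ, (∏ w, p w (a w)) * (if a u' = v' then 1 else 0) = p u' v' := by
    rw [sum_prod_mul_apply hp u' fun x => if x = v' then 1 else 0]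
    simp
  rw [mul_apply, sum_congr rfl fun a _ =>
      encodingPinv_apply_mul_weightedEncoding_apply (fun u v => (hp_pos u v).le) u u' v v' a,
    sum_sub_distrib, sum_add_distrib, ← mul_sum, ← mul_sum, sum_comm, hfirst, hsecond,
    sum_sum_prod_mul_inv_apply hp hp0 u' fun x => if x = v' then 1 else 0]
  simp only [encodingProj, of_apply, mul_ite, mul_one, mul_zero, sum_ite_eq', mem_univ, if_true]
  split_ifs <;> field_simp <;> ring

theorem weightedEncoding_isMoorePenroseInverse [Nonempty ι] [Nonempty κ] {p : ι → κ → ℝ}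
    (hp_pos : ∀ u v, 0 < p u v) (hp : ∀ u, ∑ v, p u v = 1) :
    (weightedEncoding p).IsMoorePenroseInverse (encodingPinv p) := by
  have hQ := encodingPinv_mul_weightedEncoding hp_pos hp
  refine ⟨weightedEncoding_mul_encodingPinv_isSymm p, hQ ▸ encodingProj_isSymm, ?_, ?_⟩
  · rw [Matrix.mul_assoc, hQ, weightedEncoding_mul_encodingProj]
  · rw [hQ, encodingProj_mul_encodingPinv]

end Encoding

/-- The explicit matrix `M` is the Moore–Penrose pseudoinverse of `A^p = diag(√p)·A`,
where `A` is the m-ary encoding matrix and `p` a strictly positive product distribution. -/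
theorem stmt0 (n m : ℕ) (hn : 0 < n) (hm : 0 < m)
    (p : Fin n → Fin m → ℝ)
    (hp_pos : ∀ u v, 0 < p u v)
    (hp_sum : ∀ u, ∑ v, p u v = 1)
    (A : Matrix (Fin n → Fin m) (Fin n × Fin m) ℝ)
    (hA : ∀ a uv, A a uv = if a uv.1 = uv.2 then 1 else 0)
    (P : (Fin n → Fin m) → ℝ)
    (hP : ∀ a, P a = ∏ u, p u (a u))
    (Ap : Matrix (Fin n → Fin m) (Fin n × Fin m) ℝ)
    (hAp : ∀ a uv, Ap a uv = Real.sqrt (P a) * A a uv)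
    (M : Matrix (Fin n × Fin m) (Fin n → Fin m) ℝ)
    (hM : ∀ u v a, M (u, v) a =
      Real.sqrt ((∏ u' ∈ univ.erase u, p u' (a u')) / p u (a u)) * (if a u = v then 1 else 0)
        - ((n : ℝ) - 1) / n * Real.sqrt (P a)
        - (1 / m) * Real.sqrt ((∏ u' ∈ univ.erase u, p u' (a u')) / p u (a u))
        + (1 / (m * n)) *
            ∑ u', Real.sqrt ((∏ u'' ∈ univ.erase u', p u'' (a u'')) / p u' (a u'))) :
    (Ap * M).IsSymm ∧ (M * Ap).IsSymm ∧ Ap * M * Ap = Ap ∧ M * Ap * M = M := by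
  have : Nonempty (Fin n) := ⟨⟨0, hn⟩⟩
  have : Nonempty (Fin m) := ⟨⟨0, hm⟩⟩
  have hAp_eq : Ap = weightedEncoding p := by
    ext a x
    rw [hAp, hA, hP]
    rfl
  have hM_eq : M = encodingPinv p := by
    ext ⟨u, v⟩ a
    have hsqrt : ∀ u, √((∏ w ∈ univ.erase u, p w (a w)) / p u (a u)) =
        √(∏ w, p w (a w)) / p u (a u) :=
      fun u => sqrt_prod_erase_div (fun w => p w (a w)) (hp_pos u (a u)).le
    simp only [hM, hP, encodingPinv, of_apply, Fintype.card_fin, hsqrt,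
      div_eq_mul_one_div (√(∏ w, p w (a w))), ← mul_sum]
    ring
  subst hAp_eq hM_eq
  exact weightedEncoding_isMoorePenroseInverse hp_pos hp_sum
end

section
/- With A, p, A^p as above, the matrix M A^p (equal to A^{p,†} A^p) has the explicit form: its (i, i') entry, where i = u·m+v and i' = u'·m+v', equals 1 − 1/m + 1/(mn) if i = i'; equals −1/m + 1/(mn) if u = u' but v ≠ v'; and equals 1/(mn) if u ≠ u'. In particular M A^p does not depend on the product distribution p. -/
open Matrix Finset

/-!
Write `q_w(a) = ∏_{x ≠ w} p_x(a_x)`, so that `P(a) = p_w(a_w) q_w(a)` and every square root in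
`M(u,v)_a · √P(a)` collapses: `√(q_w(a) / p_w(a_w)) · √P(a) = q_w(a)`. The entry of `M A^p` is then
a linear combination of sums `∑_a [a_{u'} = v'] f(a)` in which `f` is a product of one-coordinate
factors; such a sum factorises into one-coordinate sums, each of which is `1`, `m`, `p_{u'}(v')` or
an indicator because `∑_v p_u(v) = 1`. In the resulting combination the weights `p_{u'}(v')` cancel.
-/

section ProductWeights

variable {ι α R : Type*} [Fintype ι] [DecidableEq ι] [CommSemiring R]

lemma prod_update_apply (g : ι → α → R) (w : ι) (h : α → R) (a : ι → α) :
    ∏ x, Function.update g w h x (a x) = h (a w) * ∏ x ∈ univ.erase w, g x (a x) := by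
  rw [← mul_prod_erase univ _ (mem_univ w), Function.update_self]
  congr 1
  exact prod_congr rfl fun x hx => by rw [Function.update_of_ne (ne_of_mem_erase hx)]

variable [Fintype α] {p : ι → α → R}

lemma prod_erase_sum_update (hp : ∀ x, ∑ y, p x y = 1) (u w : ι) (h : α → R) :
    ∏ x ∈ univ.erase u, ∑ y, Function.update p w h x y = if w = u then 1 else ∑ y, h y := by
  have : (fun x => ∑ y, Function.update p w h x y) = Pi.mulSingle w (∑ y, h y) := by
    ext x
    rcases eq_or_ne x w with rfl | hx
    · simp
    · simp [hx, hp]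
  rw [this, prod_pi_mulSingle']
  simp [eq_comm]

variable [DecidableEq α]

lemma sum_ite_apply_mul_prod (g : ι → α → R) (u : ι) (v : α) :
    ∑ a : ι → α, (if a u = v then 1 else 0) * ∏ x, g x (a x)
      = g u v * ∏ x ∈ univ.erase u, ∑ y, g x y := by
  have h : ∀ a : ι → α, (if a u = v then 1 else 0) * ∏ x, g x (a x)
      = ∏ x, Function.update g u (fun y => if y = v then g u y else 0) x (a x) := by
    intro a
    rw [prod_update_apply, ← mul_prod_erase univ _ (mem_univ u), ← mul_assoc]
    split_ifs <;> simp_all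
  simp_rw [h, ← Fintype.prod_sum, ← mul_prod_erase univ _ (mem_univ u), Function.update_self,
    sum_ite_eq', if_pos (mem_univ v)]
  congr 1
  exact prod_congr rfl fun x hx => by simp only [Function.update_of_ne (ne_of_mem_erase hx)]

lemma sum_ite_mul_apply_mul_prod_erase (hp : ∀ x, ∑ y, p x y = 1) (u w : ι) (v : α) (h : α → R) :
    ∑ a : ι → α, (if a u = v then 1 else 0) * (h (a w) * ∏ x ∈ univ.erase w, p x (a x))
      = if w = u then h v else p u v * ∑ y, h y := by
  simp_rw [← prod_update_apply, sum_ite_apply_mul_prod, prod_erase_sum_update hp]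
  rcases eq_or_ne w u with rfl | hwu
  · simp
  · simp [hwu, Function.update_of_ne hwu.symm]

lemma sum_ite_mul_prod (hp : ∀ x, ∑ y, p x y = 1) (u : ι) (v : α) :
    ∑ a : ι → α, (if a u = v then 1 else 0) * ∏ x, p x (a x) = p u v := by
  have h := sum_ite_mul_apply_mul_prod_erase hp u u v (p u)
  rw [if_pos rfl] at h
  rw [← h]
  exact sum_congr rfl fun a _ => by rw [mul_prod_erase univ (fun x => p x (a x)) (mem_univ u)]

lemma sum_ite_mul_prod_erase (hp : ∀ x, ∑ y, p x y = 1) (u w : ι) (v : α) :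
    ∑ a : ι → α, (if a u = v then 1 else 0) * ∏ x ∈ univ.erase w, p x (a x)
      = if w = u then 1 else Fintype.card α * p u v := by
  simpa [mul_comm] using sum_ite_mul_apply_mul_prod_erase hp u w v (fun _ => 1)

lemma sum_ite_mul_ite_mul_prod_erase (hp : ∀ x, ∑ y, p x y = 1) (u w : ι) (v y : α) :
    ∑ a : ι → α, (if a u = v then 1 else 0) *
        ((if a w = y then 1 else 0) * ∏ x ∈ univ.erase w, p x (a x))
      = if w = u then (if y = v then 1 else 0) else p u v := by
  simpa [eq_comm] using sum_ite_mul_apply_mul_prod_erase hp u w v (fun z => if z = y then 1 else 0)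

end ProductWeights

lemma sum_ite_eq_else_const {ι R : Type*} [Fintype ι] [DecidableEq ι] [CommRing R] (i : ι) (a c : R) :
    ∑ j, (if j = i then a else c) = a - c + Fintype.card ι * c := by
  have h : ∀ j, (if j = i then a else c) = (if j = i then a - c else 0) + c := by
    intro j; split_ifs <;> ring
  simp [h, sum_add_distrib]

lemma Real.sqrt_div_mul_sqrt_mul {a b : ℝ} (ha : 0 < a) (hb : 0 ≤ b) :
    √(b / a) * √(a * b) = b := by
  rw [← Real.sqrt_mul (div_nonneg hb ha.le), show b / a * (a * b) = b * b by field_simp,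
    Real.sqrt_mul_self hb]

lemma sqrt_prod_erase_div_mul_sqrt_prod {ι α : Type*} [Fintype ι] [DecidableEq ι]
    {p : ι → α → ℝ} (hp : ∀ x y, 0 < p x y) (w : ι) (a : ι → α) :
    √((∏ x ∈ univ.erase w, p x (a x)) / p w (a w)) * √(∏ x, p x (a x))
      = ∏ x ∈ univ.erase w, p x (a x) := by
  rw [← mul_prod_erase univ _ (mem_univ w)]
  exact Real.sqrt_div_mul_sqrt_mul (hp w (a w)) (prod_nonneg fun x _ => (hp x (a x)).le)

theorem stmt1_general (n m : ℕ)
    (p : Fin n → Fin m → ℝ)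
    (hp_pos : ∀ u v, 0 < p u v)
    (hp_sum : ∀ u, ∑ v, p u v = 1)
    (A : Matrix (Fin n → Fin m) (Fin n × Fin m) ℝ)
    (hA : ∀ a uv, A a uv = if a uv.1 = uv.2 then 1 else 0)
    (P : (Fin n → Fin m) → ℝ)
    (hP : ∀ a, P a = ∏ u, p u (a u))
    (Ap : Matrix (Fin n → Fin m) (Fin n × Fin m) ℝ)
    (hAp : ∀ a uv, Ap a uv = Real.sqrt (P a) * A a uv)
    (M : Matrix (Fin n × Fin m) (Fin n → Fin m) ℝ)
    (hM : ∀ u v a, M (u, v) a =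
      Real.sqrt ((∏ u' ∈ univ.erase u, p u' (a u')) / p u (a u)) * (if a u = v then 1 else 0)
        - ((n : ℝ) - 1) / n * Real.sqrt (P a)
        - (1 / m) * Real.sqrt ((∏ u' ∈ univ.erase u, p u' (a u')) / p u (a u))
        + (1 / (m * n)) *
            ∑ u', Real.sqrt ((∏ u'' ∈ univ.erase u', p u'' (a u'')) / p u' (a u'))) :
    ∀ (u u' : Fin n) (v v' : Fin m),
      (M * Ap) (u, v) (u', v') =
        if u = u' ∧ v = v' then 1 - 1 / (m : ℝ) + 1 / ((m : ℝ) * n)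
        else if u = u' then -(1 / (m : ℝ)) + 1 / ((m : ℝ) * n)
        else 1 / ((m : ℝ) * n) := by
  intro u u' v v'
  have hentry : ∀ a, M (u, v) a * Ap a (u', v') =
      (if a u' = v' then 1 else 0) *
          ((if a u = v then 1 else 0) * ∏ x ∈ univ.erase u, p x (a x))
        - ((n : ℝ) - 1) / n * ((if a u' = v' then 1 else 0) * P a)
        - 1 / m * ((if a u' = v' then 1 else 0) * ∏ x ∈ univ.erase u, p x (a x))
        + 1 / (m * n) * ∑ w, (if a u' = v' then 1 else 0) * ∏ x ∈ univ.erase w, p x (a x) := by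
    intro a
    have hsqrt : ∀ w, √((∏ x ∈ univ.erase w, p x (a x)) / p w (a w)) * √(P a)
        = ∏ x ∈ univ.erase w, p x (a x) :=
      fun w => hP a ▸ sqrt_prod_erase_div_mul_sqrt_prod hp_pos w a
    have hPP : √(P a) * √(P a) = P a :=
      Real.mul_self_sqrt (hP a ▸ prod_nonneg fun x _ => (hp_pos x (a x)).le)
    have hsum : (∑ w, √((∏ x ∈ univ.erase w, p x (a x)) / p w (a w))) * √(P a)
        = ∑ w, ∏ x ∈ univ.erase w, p x (a x) := by
      rw [sum_mul]
      exact sum_congr rfl fun w _ => hsqrt w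
    simp only [hAp, hA, hM, ← mul_sum]
    set χ : ℝ := if a u = v then 1 else 0
    set χ' : ℝ := if a u' = v' then 1 else 0
    linear_combination (χ' * χ - 1 / m * χ') * hsqrt u - (n - 1) / n * χ' * hPP
      + 1 / (m * n) * χ' * hsum
  rw [mul_apply, sum_congr rfl fun a _ => hentry a]
  simp only [sum_add_distrib, sum_sub_distrib]
  rw [← mul_sum _ _ (1 / ((m : ℝ) * n)), sum_comm]
  simp only [← mul_sum, hP, sum_ite_mul_prod hp_sum, sum_ite_mul_prod_erase hp_sum,
    sum_ite_mul_ite_mul_prod_erase hp_sum, sum_ite_eq_else_const, Fintype.card_fin]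
  have hm : (m : ℝ) ≠ 0 := Nat.cast_ne_zero.2 v.pos.ne'
  have hn : (n : ℝ) ≠ 0 := Nat.cast_ne_zero.2 u.pos.ne'
  by_cases huu : u = u' <;> by_cases hvv : v = v' <;> simp [huu, hvv] <;> field_simp <;> ring

/-- Explicit form of `A^{p,†} A^p = M A^p`: it does not depend on `p`. -/
theorem stmt1 (n m : ℕ) (hn : 0 < n) (hm : 0 < m)
    (p : Fin n → Fin m → ℝ)
    (hp_pos : ∀ u v, 0 < p u v)
    (hp_sum : ∀ u, ∑ v, p u v = 1)
    (A : Matrix (Fin n → Fin m) (Fin n × Fin m) ℝ)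
    (hA : ∀ a uv, A a uv = if a uv.1 = uv.2 then 1 else 0)
    (P : (Fin n → Fin m) → ℝ)
    (hP : ∀ a, P a = ∏ u, p u (a u))
    (Ap : Matrix (Fin n → Fin m) (Fin n × Fin m) ℝ)
    (hAp : ∀ a uv, Ap a uv = Real.sqrt (P a) * A a uv)
    (M : Matrix (Fin n × Fin m) (Fin n → Fin m) ℝ)
    (hM : ∀ u v a, M (u, v) a =
      Real.sqrt ((∏ u' ∈ univ.erase u, p u' (a u')) / p u (a u)) * (if a u = v then 1 else 0)
        - ((n : ℝ) - 1) / n * Real.sqrt (P a)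
        - (1 / m) * Real.sqrt ((∏ u' ∈ univ.erase u, p u' (a u')) / p u (a u))
        + (1 / (m * n)) *
            ∑ u', Real.sqrt ((∏ u'' ∈ univ.erase u', p u'' (a u'')) / p u' (a u'))) :
    ∀ (u u' : Fin n) (v v' : Fin m),
      (M * Ap) (u, v) (u', v') =
        if u = u' ∧ v = v' then 1 - 1 / (m : ℝ) + 1 / ((m : ℝ) * n)
        else if u = u' then -(1 / (m : ℝ)) + 1 / ((m : ℝ) * n)
        else 1 / ((m : ℝ) * n) :=
  stmt1_general n m p hp_pos hp_sum A hA P hP Ap hAp M hM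
end

section
/- Let 𝒮 be a finite state set, 𝒜 a finite individual action set, n the number of agents, r: 𝒮 × 𝒜ⁿ → ℝ bounded rewards, P a transition kernel, and γ ∈ [0,1). Define the IGM function class 𝒬^IGM as the set of tuples (Q_tot, Q₁,…,Q_n) with Q_tot: 𝒮 × 𝒜ⁿ → ℝ and Qᵢ: 𝒮 × 𝒜 → ℝ such that for every state s, argmax over joint actions a of Q_tot(s,a) contains the joint action (argmax_{a₁} Q₁(s,a₁), …, argmax_{a_n} Q_n(s,a_n)). Then 𝒬^IGM is complete in the sense that for any function y: 𝒮 × 𝒜ⁿ → ℝ there exists (Q_tot, Q₁,…,Q_n) ∈ 𝒬^IGM with Q_tot = y (choosing Qᵢ(s, aᵢ) = 1 if aᵢ equals the i-th component of a fixed maximizer of y(s,·) and 0 otherwise). -/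
/-!
Pick a maximizer `a* s` of `y s` and let agent `i` put utility `1` on `a* s i` and `0` on every
other action. Then the individual greedy actions reassemble exactly into `a* s`, which is a greedy
joint action of `Q_tot = y`.
-/

lemma eq_of_forall_ite_le {ι α : Type*} [DecidableEq α] {a astar : ι → α}
    (h : ∀ i b, (if b = astar i then 1 else 0 : ℝ) ≤ if a i = astar i then 1 else 0) :
    a = astar := by
  funext i
  by_contra hne
  have := h i (astar i)
  simp only [if_true, hne, if_false] at this
  exact absurd this zero_lt_one.not_ge

theorem stmt8_general (S A : Type*) [Fintype A] [Nonempty A] (n : ℕ)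
    (y : S → (Fin n → A) → ℝ) :
    ∃ (Qtot : S → (Fin n → A) → ℝ) (Qi : Fin n → S → A → ℝ),
      (∀ (s : S) (a : Fin n → A),
        (∀ i b, Qi i s b ≤ Qi i s (a i)) → ∀ a', Qtot s a' ≤ Qtot s a)
      ∧ Qtot = y := by
  classical
  choose astar hastar using fun s => Finite.exists_max (y s)
  refine ⟨y, fun i s b => if b = astar s i then 1 else 0, fun s a hgreedy => ?_, rfl⟩
  rw [eq_of_forall_ite_le hgreedy]
  exact hastar s

/-- Completeness of the IGM function class: every joint function `y` is the
`Q_tot`-component of some tuple satisfying the IGM principle. -/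
theorem stmt8 (S A : Type*) [Fintype S] [Fintype A] [Nonempty S] [Nonempty A] (n : ℕ)
    (y : S → (Fin n → A) → ℝ) :
    ∃ (Qtot : S → (Fin n → A) → ℝ) (Qi : Fin n → S → A → ℝ),
      (∀ (s : S) (a : Fin n → A),
        (∀ i b, Qi i s b ≤ Qi i s (a i)) → ∀ a', Qtot s a' ≤ Qtot s a)
      ∧ Qtot = y :=
  stmt8_general S A n y
end

section
/- Under the completeness of the IGM function class, the FQI-IGM iteration coincides with exact value iteration and is a γ-contraction: if Q^{(t+1)}_tot is defined as the projection (in weighted L² with strictly positive weights) of the target y^{(t)}(s,a) = r(s,a) + γ E_{s'}[max_{a'} Q^{(t)}_tot(s',a')] onto the Q_tot-components of 𝒬^IGM, then Q^{(t+1)}_tot = y^{(t)} exactly, and consequently ‖Q^{(t+1)}_tot − Q*_tot‖_∞ ≤ γ ‖Q^{(t)}_tot − Q*_tot‖_∞, where Q* is the optimal joint action-value function (the unique fixed point of the Bellman optimality operator). In particular, FQI-IGM converges to Q* from any initialization. -/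
/-!
Since every joint action-value function admits individual utilities whose greedy actions are
jointly greedy (the indicator of a joint argmax), the IGM class is everything. The Bellman target
is therefore admissible, and a strictly positively weighted least-squares fit that may choose the
target itself must reproduce it exactly. FQI-IGM is then exact value iteration, and the Bellman
optimality operator is a `γ`-contraction in the sup norm because `max` is 1-Lipschitz and
averaging against a probability kernel does not increase the sup norm.
-/

open Finset Filter Topology

theorem exists_utilities_greedy_imp_joint_greedy {S ι A : Type*} [Finite ι] [Finite A]
    [Nonempty A] (Q : S → (ι → A) → ℝ) :
    ∃ Qi : ι → S → A → ℝ, ∀ (s : S) (a : ι → A),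
      (∀ i b, Qi i s b ≤ Qi i s (a i)) → ∀ a', Q s a' ≤ Q s a := by
  classical
  choose am ham using fun s => Finite.exists_max (Q s)
  refine ⟨fun i s b => if b = am s i then 1 else 0, fun s a hgreedy => ?_⟩
  have ha : a = am s := funext fun i => by
    by_contra hne
    have h := hgreedy i (am s i)
    norm_num [hne] at h
  exact ha ▸ ham s

theorem eq_of_sum_mul_sq_sub_nonpos {α : Type*} [Fintype α] {w y q : α → ℝ}
    (hw : ∀ x, 0 < w x) (h : ∑ x, w x * (y x - q x) ^ 2 ≤ 0) : q = y := by
  have hterm : ∀ x ∈ univ, 0 ≤ w x * (y x - q x) ^ 2 :=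
    fun x _ => mul_nonneg (hw x).le (sq_nonneg _)
  have hzero := (sum_eq_zero_iff_of_nonneg hterm).mp (le_antisymm h (sum_nonneg hterm))
  funext x
  have hsq := (mul_eq_zero.mp (hzero x (mem_univ x))).resolve_left (hw x).ne'
  linarith [(pow_eq_zero_iff two_ne_zero).mp hsq]

theorem abs_sup'_sub_sup'_le {β : Type*} {s : Finset β} (hs : s.Nonempty) {f g : β → ℝ}
    {C : ℝ} (h : ∀ x, |f x - g x| ≤ C) : |s.sup' hs f - s.sup' hs g| ≤ C := by
  have hle : ∀ f g : β → ℝ, (∀ x, |f x - g x| ≤ C) → s.sup' hs f ≤ s.sup' hs g + C :=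
    fun f g h => sup'_le hs f fun x hx => by
      linarith [le_sup' g hx, (abs_le.mp (h x)).2]
  refine abs_sub_le_iff.mpr ⟨by linarith [hle f g h], ?_⟩
  linarith [hle g f fun x => abs_sub_comm (f x) (g x) ▸ h x]

theorem abs_sum_mul_le_of_stochastic {β : Type*} [Fintype β] {P f : β → ℝ} {C : ℝ}
    (hP0 : ∀ x, 0 ≤ P x) (hP1 : ∑ x, P x = 1) (hf : ∀ x, |f x| ≤ C) :
    |∑ x, P x * f x| ≤ C :=
  calc |∑ x, P x * f x|
      ≤ ∑ x, |P x * f x| := abs_sum_le_sum_abs _ _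
    _ = ∑ x, P x * |f x| := by simp only [abs_mul, abs_of_nonneg (hP0 _)]
    _ ≤ ∑ x, P x * C := sum_le_sum fun x _ => mul_le_mul_of_nonneg_left (hf x) (hP0 x)
    _ = C := by rw [← sum_mul, hP1, one_mul]

theorem tendsto_of_abs_sub_le_pow_mul {u : ℕ → ℝ} {x γ C : ℝ} (hγ0 : 0 ≤ γ) (hγ1 : γ < 1)
    (h : ∀ t, |u t - x| ≤ γ ^ t * C) : Tendsto u atTop (𝓝 x) := by
  have hlim : Tendsto (fun t => γ ^ t * C) atTop (𝓝 0) := by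
    simpa using (tendsto_pow_atTop_nhds_zero_of_lt_one hγ0 hγ1).mul_const C
  simpa using (squeeze_zero_norm h hlim).add_const x

section Bellman

variable {S α : Type*} [Fintype S] [Fintype α] [Nonempty α]

noncomputable def bellmanOptimality (r : S → α → ℝ) (P : S → α → S → ℝ) (γ : ℝ)
    (Q : S → α → ℝ) : S → α → ℝ :=
  fun s a => r s a + γ * ∑ s', P s a s' * univ.sup' univ_nonempty (Q s')

variable {r : S → α → ℝ} {P : S → α → S → ℝ} {γ : ℝ}

theorem abs_bellmanOptimality_sub_le (hP0 : ∀ s a s', 0 ≤ P s a s')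
    (hP1 : ∀ s a, ∑ s', P s a s' = 1) (hγ0 : 0 ≤ γ) {Q Q' : S → α → ℝ} {C : ℝ}
    (hC : ∀ s a, |Q s a - Q' s a| ≤ C) (s : S) (a : α) :
    |bellmanOptimality r P γ Q s a - bellmanOptimality r P γ Q' s a| ≤ γ * C := by
  have hmax : ∀ s', |univ.sup' univ_nonempty (Q s') - univ.sup' univ_nonempty (Q' s')| ≤ C :=
    fun s' => abs_sup'_sub_sup'_le _ (hC s')
  have hdiff : bellmanOptimality r P γ Q s a - bellmanOptimality r P γ Q' s a =
      γ * ∑ s', P s a s' *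
        (univ.sup' univ_nonempty (Q s') - univ.sup' univ_nonempty (Q' s')) := by
    simp only [bellmanOptimality, mul_sub, sum_sub_distrib]
    ring
  rw [hdiff, abs_mul, abs_of_nonneg hγ0]
  exact mul_le_mul_of_nonneg_left (abs_sum_mul_le_of_stochastic (hP0 s a) (hP1 s a) hmax) hγ0

theorem abs_sub_fixedPoint_le_of_bellmanOptimality (hP0 : ∀ s a s', 0 ≤ P s a s')
    (hP1 : ∀ s a, ∑ s', P s a s' = 1) (hγ0 : 0 ≤ γ) {Qs : ℕ → S → α → ℝ} {Qstar : S → α → ℝ}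
    (hstep : ∀ t, Qs (t + 1) = bellmanOptimality r P γ (Qs t))
    (hfix : bellmanOptimality r P γ Qstar = Qstar) :
    ∀ t s a, |Qs t s a - Qstar s a| ≤ γ ^ t * ‖Qs 0 - Qstar‖ := by
  intro t
  induction t with
  | zero =>
    intro s a
    simpa using (norm_le_pi_norm ((Qs 0 - Qstar) s) a).trans (norm_le_pi_norm (Qs 0 - Qstar) s)
  | succ t ih =>
    intro s a
    rw [hstep, ← congrFun (congrFun hfix s) a, pow_succ', mul_assoc]
    exact abs_bellmanOptimality_sub_le hP0 hP1 hγ0 ih s a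

end Bellman

theorem stmt9_general (S A : Type*) [Fintype S] [Fintype A] [Nonempty A] (n : ℕ)
    (r : S → (Fin n → A) → ℝ)
    (Pr : S → (Fin n → A) → S → ℝ)
    (hPr0 : ∀ s a s', 0 ≤ Pr s a s')
    (hPr1 : ∀ s a, ∑ s', Pr s a s' = 1)
    (γ : ℝ) (hγ0 : 0 ≤ γ) (hγ1 : γ < 1)
    (p : S → (Fin n → A) → ℝ) (hp : ∀ s a, 0 < p s a)
    (IGM : (S → (Fin n → A) → ℝ) → Prop)
    (hIGM : ∀ Qtot, IGM Qtot ↔ ∃ Qi : Fin n → S → A → ℝ,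
      ∀ (s : S) (a : Fin n → A),
        (∀ i b, Qi i s b ≤ Qi i s (a i)) → ∀ a', Qtot s a' ≤ Qtot s a)
    (Qstar : S → (Fin n → A) → ℝ)
    (hstar : ∀ s a, Qstar s a = r s a + γ * ∑ s', Pr s a s' *
      Finset.univ.sup' Finset.univ_nonempty (fun a' : Fin n → A => Qstar s' a'))
    (Qs : ℕ → S → (Fin n → A) → ℝ)
    (y : ℕ → S → (Fin n → A) → ℝ)
    (hy : ∀ t s a, y t s a = r s a + γ * ∑ s', Pr s a s' *
      Finset.univ.sup' Finset.univ_nonempty (fun a' : Fin n → A => Qs t s' a'))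
    (hmin : ∀ t (Q' : S → (Fin n → A) → ℝ), IGM Q' →
      ∑ s, ∑ a, p s a * (y t s a - Qs (t + 1) s a) ^ 2
        ≤ ∑ s, ∑ a, p s a * (y t s a - Q' s a) ^ 2) :
    (∀ t s a, Qs (t + 1) s a = y t s a)
    ∧ (∀ (t : ℕ) (C : ℝ), (∀ s a, |Qs t s a - Qstar s a| ≤ C) →
        ∀ s a, |Qs (t + 1) s a - Qstar s a| ≤ γ * C)
    ∧ (∀ s a, Filter.Tendsto (fun t => Qs t s a) Filter.atTop (nhds (Qstar s a))) := by
  have hproj : ∀ t, Qs (t + 1) = y t := fun t => by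
    have hfit := hmin t (y t) ((hIGM _).mpr (exists_utilities_greedy_imp_joint_greedy _))
    simp only [sub_self, ne_eq, OfNat.ofNat_ne_zero, not_false_eq_true, zero_pow, mul_zero,
      sum_const_zero, ← Fintype.sum_prod_type'] at hfit
    funext s a
    exact congrFun (eq_of_sum_mul_sq_sub_nonpos (fun x => hp x.1 x.2) hfit) (s, a)
  have hstep : ∀ t, Qs (t + 1) = bellmanOptimality r Pr γ (Qs t) := fun t => by
    rw [hproj]
    exact funext fun s => funext (hy t s)
  have hfix : bellmanOptimality r Pr γ Qstar = Qstar :=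
    funext fun s => funext fun a => (hstar s a).symm
  refine ⟨fun t s a => by rw [hproj], fun t C hC s a => ?_, fun s a => ?_⟩
  · rw [hstep, ← congrFun (congrFun hfix s) a]
    exact abs_bellmanOptimality_sub_le hPr0 hPr1 hγ0 hC s a
  · exact tendsto_of_abs_sub_le_pow_mul hγ0 hγ1
      (abs_sub_fixedPoint_le_of_bellmanOptimality hPr0 hPr1 hγ0 hstep hfix · s a)

/-- With the complete IGM class, FQI-IGM projection equals the exact Bellman target,
is a γ-contraction towards the optimal `Q*`, and converges from any initialization. -/
theorem stmt9 (S A : Type*) [Fintype S] [Fintype A] [Nonempty S] [Nonempty A] (n : ℕ)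
    (r : S → (Fin n → A) → ℝ)
    (Pr : S → (Fin n → A) → S → ℝ)
    (hPr0 : ∀ s a s', 0 ≤ Pr s a s')
    (hPr1 : ∀ s a, ∑ s', Pr s a s' = 1)
    (γ : ℝ) (hγ0 : 0 ≤ γ) (hγ1 : γ < 1)
    (p : S → (Fin n → A) → ℝ) (hp : ∀ s a, 0 < p s a)
    (IGM : (S → (Fin n → A) → ℝ) → Prop)
    (hIGM : ∀ Qtot, IGM Qtot ↔ ∃ Qi : Fin n → S → A → ℝ,
      ∀ (s : S) (a : Fin n → A),
        (∀ i b, Qi i s b ≤ Qi i s (a i)) → ∀ a', Qtot s a' ≤ Qtot s a)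
    (Qstar : S → (Fin n → A) → ℝ)
    (hstar : ∀ s a, Qstar s a = r s a + γ * ∑ s', Pr s a s' *
      Finset.univ.sup' Finset.univ_nonempty (fun a' : Fin n → A => Qstar s' a'))
    (Qs : ℕ → S → (Fin n → A) → ℝ)
    (y : ℕ → S → (Fin n → A) → ℝ)
    (hy : ∀ t s a, y t s a = r s a + γ * ∑ s', Pr s a s' *
      Finset.univ.sup' Finset.univ_nonempty (fun a' : Fin n → A => Qs t s' a'))
    (hmem : ∀ t, IGM (Qs (t + 1)))
    (hmin : ∀ t (Q' : S → (Fin n → A) → ℝ), IGM Q' →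
      ∑ s, ∑ a, p s a * (y t s a - Qs (t + 1) s a) ^ 2
        ≤ ∑ s, ∑ a, p s a * (y t s a - Q' s a) ^ 2) :
    (∀ t s a, Qs (t + 1) s a = y t s a)
    ∧ (∀ (t : ℕ) (C : ℝ), (∀ s a, |Qs t s a - Qstar s a| ≤ C) →
        ∀ s a, |Qs (t + 1) s a - Qstar s a| ≤ γ * C)
    ∧ (∀ s a, Filter.Tendsto (fun t => Qs t s a) Filter.atTop (nhds (Qstar s a))) :=
  stmt9_general S A n r Pr hPr0 hPr1 γ hγ0 hγ1 p hp IGM hIGM Qstar hstar Qs y hy hmin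
end

section
/- In an MMDP (shared full observation) with uniform data distribution over joint actions, the FQI-LVF closed-form update gives, for each agent i, state s, and action aᵢ, Q_i^{(t+1)}(s, aᵢ) = E_{a'_{−i} ~ Unif}[ y^{(t)}(s, aᵢ ⊕ a'_{−i}) ] − ((n−1)/n) E_{a' ~ Unif}[ y^{(t)}(s, a') ] + wᵢ(s), where y^{(t)}(s,a) = r(s,a) + γ E_{s'}[max_{a'} Q^{(t)}_tot(s',a')] and the residues satisfy Σᵢ wᵢ(s) = 0 for each s; consequently the fitted joint value satisfies Q^{(t+1)}_tot(s, a) = Σᵢ E_{a'_{−i}}[y^{(t)}(s, aᵢ ⊕ a'_{−i})] − (n−1) E_{a'}[y^{(t)}(s, a')], independent of the choice of w. -/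
open Finset

/-!
Perturbing one entry `Q i s b` of the minimiser by `ε` changes the loss by a quadratic in `ε`
whose linear coefficient is the residual `y - Q_tot` summed over the slice `{a | a i = b}` at `s`;
minimality forces all these slice sums to vanish (the normal equations). Summing the slice
equation over the agent's own action gives `∑ₐ Q_tot s a = ∑ₐ y s a`, and averaging it over the
other agents' actions gives `∑_{a'} y s (b ⊕ a'₋ᵢ) = mⁿ Q i s b + ∑ₐ y s a - ∑ₐ Q i s (a i)`.
Solving for `Q i s b` leaves the residue `wᵢ = m⁻ⁿ (∑ₐ Q i s (a i) - (∑ₐ y s a) / n)`, and the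
`wᵢ` sum to zero, so they cancel from `Q_tot`.
-/

lemma eq_zero_of_forall_two_mul_le_sq_mul {C D : ℝ} (h : ∀ ε : ℝ, 2 * ε * C ≤ ε ^ 2 * D) :
    C = 0 := by
  have hD : 0 ≤ D := by linarith [h 1, h (-1)]
  have hε := h (C / (D + 1))
  field_simp at hε
  nlinarith [sq_nonneg C, mul_nonneg hD (sq_nonneg C)]

lemma sum_mul_mul_eq_zero_of_forall_le {κ : Type*} (s : Finset κ) (ω v e : κ → ℝ)
    (h : ∀ ε : ℝ, ∑ k ∈ s, ω k * v k ^ 2 ≤ ∑ k ∈ s, ω k * (v k - ε * e k) ^ 2) :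
    ∑ k ∈ s, ω k * v k * e k = 0 := by
  refine eq_zero_of_forall_two_mul_le_sq_mul (D := ∑ k ∈ s, ω k * e k ^ 2) fun ε => ?_
  have hexpand : ∑ k ∈ s, ω k * (v k - ε * e k) ^ 2 = ∑ k ∈ s, ω k * v k ^ 2
      - 2 * ε * ∑ k ∈ s, ω k * v k * e k + ε ^ 2 * ∑ k ∈ s, ω k * e k ^ 2 := by
    simp only [mul_sum, ← sum_sub_distrib, ← sum_add_distrib]
    exact sum_congr rfl fun k _ => by ring
  linarith [h ε]

section Coordinates

variable {ι α : Type*} [Fintype ι] [DecidableEq ι] [Fintype α]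

lemma sum_comp_update [DecidableEq α] {M : Type*} [AddCommMonoid M] (i : ι) (b : α)
    (F : (ι → α) → M) :
    ∑ a, F (Function.update a i b) = Fintype.card α • ∑ a with a i = b, F a := by
  rw [← sum_fiberwise univ (fun a => a i), ← card_univ, ← sum_const]
  refine sum_congr rfl fun c _ => ?_
  refine sum_bij' (fun a _ => Function.update a i b) (fun a _ => Function.update a i c)
    ?_ ?_ ?_ ?_ fun _ _ => rfl <;> intro a ha <;> simp_all

lemma sum_sum_comp_update (Q : ι → α → ℝ) (i : ι) (b : α) :
    ∑ a, ∑ j, Q j (Function.update a i b j)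
      = Fintype.card (ι → α) * Q i b + ∑ a : ι → α, ∑ j, Q j (a j) - ∑ a : ι → α, Q i (a i) := by
  have hdiff : ∑ a, ∑ j, Q j (Function.update a i b j) - ∑ a : ι → α, ∑ j, Q j (a j)
      = ∑ a : ι → α, (Q i b - Q i (a i)) := by
    simp only [← sum_sub_distrib]
    rw [sum_comm]
    refine (Fintype.sum_eq_single i fun j hj => sum_eq_zero fun a _ => ?_).trans ?_
    · rw [Function.update_of_ne hj, sub_self]
    · simp only [Function.update_self]
  rw [sum_sub_distrib, sum_const, card_univ, nsmul_eq_mul] at hdiff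
  linarith

variable [DecidableEq α] {y : (ι → α) → ℝ} {Q : ι → α → ℝ}

lemma sum_sum_eq_sum_of_normal [Nonempty ι]
    (hnormal : ∀ i b, ∑ a with a i = b, (y a - ∑ j, Q j (a j)) = 0) :
    ∑ a : ι → α, ∑ j, Q j (a j) = ∑ a, y a := by
  obtain ⟨i⟩ := ‹Nonempty ι›
  have hres : ∑ a, (y a - ∑ j, Q j (a j)) = 0 := by
    rw [← sum_fiberwise univ (fun a => a i)]
    exact sum_eq_zero fun b _ => hnormal i b
  rw [sum_sub_distrib, sub_eq_zero] at hres
  exact hres.symm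

lemma sum_comp_update_eq_of_normal
    (hnormal : ∀ i b, ∑ a with a i = b, (y a - ∑ j, Q j (a j)) = 0) (i : ι) (b : α) :
    ∑ a, y (Function.update a i b)
      = Fintype.card (ι → α) * Q i b + ∑ a : ι → α, ∑ j, Q j (a j) - ∑ a : ι → α, Q i (a i) := by
  have hres : ∑ a, (y (Function.update a i b) - ∑ j, Q j (Function.update a i b j)) = 0 := by
    rw [sum_comp_update (F := fun a => y a - ∑ j, Q j (a j)), hnormal, smul_zero]
  rw [sum_sub_distrib, sub_eq_zero, sum_sum_comp_update] at hres
  exact hres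

lemma sum_filter_residual_eq_zero_of_forall_loss_le {S : Type*} [Fintype S] [DecidableEq S]
    {c : ℝ} (hc : c ≠ 0) (y : S → (ι → α) → ℝ) (Q : ι → S → α → ℝ)
    (hmin : ∀ Q' : ι → S → α → ℝ, ∑ s, ∑ a, c * (y s a - ∑ i, Q i s (a i)) ^ 2
        ≤ ∑ s, ∑ a, c * (y s a - ∑ i, Q' i s (a i)) ^ 2) (s : S) (i : ι) (b : α) :
    ∑ a with a i = b, (y s a - ∑ j, Q j s (a j)) = 0 := by
  have h := sum_mul_mul_eq_zero_of_forall_le univ (fun _ => c)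
    (fun k : S × (ι → α) => y k.1 k.2 - ∑ j, Q j k.1 (k.2 j))
    (fun k => if k.1 = s ∧ k.2 i = b then 1 else 0) fun ε => by
      have := hmin fun j s' b' => Q j s' b' + ε * if j = i ∧ s' = s ∧ b' = b then 1 else 0
      simp only [Fintype.sum_prod_type]
      simpa [sum_add_distrib, ← mul_sum, ite_and, sub_add_eq_sub_sub] using this
  simp only [Fintype.sum_prod_type] at h
  have hc_mul : c * ∑ a with a i = b, (y s a - ∑ j, Q j s (a j)) = 0 := by
    rw [mul_sum, sum_filter]
    simpa only [ite_and, mul_ite, mul_one, mul_zero, sum_ite_irrel, sum_const_zero, sum_ite_eq',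
      mem_univ, if_true] using h
  exact (mul_eq_zero.1 hc_mul).resolve_left hc

lemma exists_credit_assignment [Nonempty ι] [Nonempty α]
    (hnormal : ∀ i b, ∑ a with a i = b, (y a - ∑ j, Q j (a j)) = 0) :
    ∃ w : ι → ℝ, ∑ i, w i = 0 ∧ ∀ i b, Q i b =
      ((Fintype.card α : ℝ) ^ Fintype.card ι)⁻¹ * ∑ a, y (Function.update a i b)
        - ((Fintype.card ι : ℝ) - 1) / Fintype.card ι
          * (((Fintype.card α : ℝ) ^ Fintype.card ι)⁻¹ * ∑ a, y a)
        + w i := by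
  have hK : (Fintype.card α : ℝ) ^ Fintype.card ι ≠ 0 := by positivity
  have hN : (Fintype.card ι : ℝ) ≠ 0 := by positivity
  have htotal := sum_sum_eq_sum_of_normal hnormal
  refine ⟨fun i => ((Fintype.card α : ℝ) ^ Fintype.card ι)⁻¹
      * (∑ a : ι → α, Q i (a i) - (∑ a, y a) / Fintype.card ι), ?_, fun i b => ?_⟩
  · rw [← mul_sum, sum_sub_distrib, sum_comm, htotal, sum_const, card_univ, nsmul_eq_mul]
    field_simp
    ring
  · have hupdate := sum_comp_update_eq_of_normal hnormal i b
    rw [htotal, Fintype.card_fun, Nat.cast_pow] at hupdate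
    rw [hupdate]
    field_simp
    ring

end Coordinates

theorem stmt11_general (S : Type*) [Fintype S] (n m : ℕ) (hn : 0 < n) (hm : 0 < m)
    (y : S → (Fin n → Fin m) → ℝ)
    (Qn : Fin n → S → Fin m → ℝ)
    (hmin : ∀ Q' : Fin n → S → Fin m → ℝ,
      ∑ s, ∑ a : Fin n → Fin m, ((m : ℝ) ^ n)⁻¹ * (y s a - ∑ i, Qn i s (a i)) ^ 2
        ≤ ∑ s, ∑ a : Fin n → Fin m, ((m : ℝ) ^ n)⁻¹ * (y s a - ∑ i, Q' i s (a i)) ^ 2) :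
    (∃ w : Fin n → S → ℝ, (∀ s, ∑ i, w i s = 0) ∧
      ∀ (i : Fin n) (s : S) (ai : Fin m), Qn i s ai =
        ((m : ℝ) ^ n)⁻¹ * (∑ a' : Fin n → Fin m, y s (Function.update a' i ai))
          - ((n : ℝ) - 1) / n * (((m : ℝ) ^ n)⁻¹ * ∑ a' : Fin n → Fin m, y s a')
          + w i s)
    ∧ ∀ (s : S) (a : Fin n → Fin m), ∑ i, Qn i s (a i) =
        (∑ i, ((m : ℝ) ^ n)⁻¹ * ∑ a' : Fin n → Fin m, y s (Function.update a' i (a i)))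
          - ((n : ℝ) - 1) * (((m : ℝ) ^ n)⁻¹ * ∑ a' : Fin n → Fin m, y s a') := by
  classical
  have : Nonempty (Fin n) := ⟨⟨0, hn⟩⟩
  have : Nonempty (Fin m) := ⟨⟨0, hm⟩⟩
  have hnormal := sum_filter_residual_eq_zero_of_forall_loss_le (by positivity) y Qn hmin
  choose w hw_sum hw using fun s => exists_credit_assignment (hnormal s)
  simp only [Fintype.card_fin] at hw
  refine ⟨⟨fun i s => w s i, hw_sum, fun i s b => hw s i b⟩, fun s a => ?_⟩
  have hn0 : (n : ℝ) ≠ 0 := by positivity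
  rw [sum_congr rfl fun i _ => hw s i (a i), sum_add_distrib, hw_sum, add_zero, sum_sub_distrib,
    sum_const, card_univ, Fintype.card_fin, nsmul_eq_mul]
  field_simp

/-- FQI-LVF closed-form update in an MMDP with uniform data distribution:
each individual value is the counterfactual credit assignment (up to a zero-sum
residue), and the fitted joint value is the unique closed form. -/
theorem stmt11 (S : Type*) [Fintype S] [Nonempty S] (n m : ℕ) (hn : 0 < n) (hm : 0 < m)
    (r : S → (Fin n → Fin m) → ℝ)
    (Pr : S → (Fin n → Fin m) → S → ℝ)
    (hPr0 : ∀ s a s', 0 ≤ Pr s a s')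
    (hPr1 : ∀ s a, ∑ s', Pr s a s' = 1)
    (γ : ℝ) (hγ0 : 0 ≤ γ)
    (Qtot : S → (Fin n → Fin m) → ℝ)
    (y : S → (Fin n → Fin m) → ℝ)
    (hy : ∀ s a, y s a = r s a + γ * ∑ s', Pr s a s' *
      Finset.univ.sup' (Finset.univ_nonempty_iff.mpr ⟨fun _ => ⟨0, hm⟩⟩) (fun a' : Fin n → Fin m => Qtot s' a'))
    (Qn : Fin n → S → Fin m → ℝ)
    (hmin : ∀ Q' : Fin n → S → Fin m → ℝ,
      ∑ s, ∑ a : Fin n → Fin m, ((m : ℝ) ^ n)⁻¹ * (y s a - ∑ i, Qn i s (a i)) ^ 2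
        ≤ ∑ s, ∑ a : Fin n → Fin m, ((m : ℝ) ^ n)⁻¹ * (y s a - ∑ i, Q' i s (a i)) ^ 2) :
    (∃ w : Fin n → S → ℝ, (∀ s, ∑ i, w i s = 0) ∧
      ∀ (i : Fin n) (s : S) (ai : Fin m), Qn i s ai =
        ((m : ℝ) ^ n)⁻¹ * (∑ a' : Fin n → Fin m, y s (Function.update a' i ai))
          - ((n : ℝ) - 1) / n * (((m : ℝ) ^ n)⁻¹ * ∑ a' : Fin n → Fin m, y s a')
          + w i s)
    ∧ ∀ (s : S) (a : Fin n → Fin m), ∑ i, Qn i s (a i) =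
        (∑ i, ((m : ℝ) ^ n)⁻¹ * ∑ a' : Fin n → Fin m, y s (Function.update a' i (a i)))
          - ((n : ℝ) - 1) * (((m : ℝ) ^ n)⁻¹ * ∑ a' : Fin n → Fin m, y s a') :=
  stmt11_general S n m hn hm y Qn hmin
end

section
/- The empirical Bellman operator with minimization over additively factorized value functions is not a γ-contraction in sup norm: there exist a finite MMDP, a uniform data distribution, γ ∈ (0,1), and value functions Q, Q' (with additively factorized Q_tot, Q'_tot) such that ‖(T_D^LVF Q)_tot − (T_D^LVF Q')_tot‖_∞ > γ ‖Q_tot − Q'_tot‖_∞, where T_D^LVF Q is defined as the minimizer over additively factorized functions of the uniform-weighted squared error to the Bellman target r(s,a) + γ E_{s'}[max_{a'} Q_tot(s',a')]. -/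
/-!
Fitting an additively factorized value to a Bellman target is an orthogonal projection,
and it discards the pure interaction part of the target. Take two agents and let the joint
action `(1, 1)` lead to a state worth `0` while every other joint action leads to a state
worth `1` (under `Q'`; `Q = 0`, so the inputs are at distance `1`). The target
`γ · 𝟙[a ≠ (1, 1)]` has a nonzero interaction component, and removing it pushes the fitted
value at `(0, 0)` up to `5γ/4 > γ`.
-/

open Finset

section FactoredFit

variable {S ι A : Type*} [Fintype S] [Fintype ι] [DecidableEq ι] [Fintype A]

noncomputable def bellmanTarget (r : S → (ι → A) → ℝ) (T : S → (ι → A) → S) (γ : ℝ)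
    (Q : ι → S → A → ℝ) (s : S) (a : ι → A) : ℝ :=
  r s a + γ * ⨆ a' : ι → A, ∑ i, Q i (T s a) (a' i)

def IsFactoredLeastSquaresFit (y : S → (ι → A) → ℝ) (F : ι → S → A → ℝ) : Prop :=
  ∀ X : ι → S → A → ℝ,
    ∑ s, ∑ a, (y s a - ∑ i, F i s (a i)) ^ 2 ≤ ∑ s, ∑ a, (y s a - ∑ i, X i s (a i)) ^ 2

omit [Fintype S] [DecidableEq ι] [Fintype A] in
theorem bellmanTarget_of_action_independent [Nonempty A] (r : S → (ι → A) → ℝ)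
    (T : S → (ι → A) → S) (γ : ℝ) (w : ι → S → ℝ) (s : S) (a : ι → A) :
    bellmanTarget r T γ (fun i s _ => w i s) s a = r s a + γ * ∑ i, w i (T s a) := by
  simp only [bellmanTarget, ciSup_const]

theorem sum_sq_sub_le_of_sum_mul_eq_zero {α : Type*} (s : Finset α) (y f g : α → ℝ)
    (h : ∑ x ∈ s, (y x - f x) * (f x - g x) = 0) :
    ∑ x ∈ s, (y x - f x) ^ 2 ≤ ∑ x ∈ s, (y x - g x) ^ 2 :=
  calc ∑ x ∈ s, (y x - f x) ^ 2
      ≤ ∑ x ∈ s, (y x - f x) ^ 2 + 2 * ∑ x ∈ s, (y x - f x) * (f x - g x)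
          + ∑ x ∈ s, (f x - g x) ^ 2 := by
        rw [h]; linarith [sum_nonneg fun x (_ : x ∈ s) => sq_nonneg (f x - g x)]
    _ = ∑ x ∈ s, (y x - g x) ^ 2 := by
        rw [mul_sum, ← sum_add_distrib, ← sum_add_distrib]
        exact sum_congr rfl fun x _ => by ring

theorem sum_mul_factored_eq_zero (e : (ι → A) → ℝ)
    (he : ∀ i (g : A → ℝ), ∑ a, e a * g (a i) = 0) (G : ι → A → ℝ) :
    ∑ a, e a * ∑ i, G i (a i) = 0 := by
  simp_rw [mul_sum]
  rw [sum_comm]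
  exact sum_eq_zero fun i _ => he i (G i)

theorem isFactoredLeastSquaresFit_of_orthogonal (y : S → (ι → A) → ℝ) (F : ι → S → A → ℝ)
    (h : ∀ s i (g : A → ℝ), ∑ a, (y s a - ∑ j, F j s (a j)) * g (a i) = 0) :
    IsFactoredLeastSquaresFit y F := by
  intro X
  refine sum_le_sum fun s _ => sum_sq_sub_le_of_sum_mul_eq_zero _ _ _ _ ?_
  simp_rw [← sum_sub_distrib]
  exact sum_mul_factored_eq_zero _ (h s) fun i b => F i s b - X i s b

theorem sum_prod_mul_apply_eq_zero [Nontrivial ι] (σ : A → ℝ) (hσ : ∑ b, σ b = 0) (i : ι)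
    (g : A → ℝ) : ∑ a : ι → A, (∏ j, σ (a j)) * g (a i) = 0 := by
  obtain ⟨j, hj⟩ := exists_ne i
  let φ : ι → A → ℝ := fun k b => σ b * if k = i then g b else 1
  have hφ : ∀ a : ι → A, (∏ k, σ (a k)) * g (a i) = ∏ k, φ k (a k) := by
    intro a
    simp only [φ, prod_mul_distrib, prod_ite_eq', mem_univ, if_true]
  rw [sum_congr rfl fun a _ => hφ a, ← Fintype.prod_sum]
  exact prod_eq_zero (mem_univ j) (by simp [φ, hj, hσ])

end FactoredFit

namespace FactoredBellmanCounterexample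

noncomputable section

def spin (b : Fin 2) : ℝ := if b = 0 then 1 else -1

def next (a : Fin 2 → Fin 2) : Fin 2 := if a 0 = 1 ∧ a 1 = 1 then 0 else 1

def value (s : Fin 2) : ℝ := if s = 1 then 1 / 2 else 0

-- Half the grand mean `3/8` of the target `1/2 · 𝟙[a ≠ (1, 1)]` plus its main effect `spin b / 8`.
def fit (b : Fin 2) : ℝ := 3 / 16 + spin b / 8

theorem sum_spin : ∑ b, spin b = 0 := by
  simp [Fin.sum_univ_two, spin]

theorem target_sub_fit (a : Fin 2 → Fin 2) :
    (1 / 2 * ∑ _i : Fin 2, value (next a)) - ∑ i, fit (a i) = -(1 / 8) * ∏ i, spin (a i) := by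
  obtain ⟨b₀, b₁, rfl⟩ : ∃ b₀ b₁, a = ![b₀, b₁] := ⟨a 0, a 1, by ext i; fin_cases i <;> rfl⟩
  fin_cases b₀ <;> fin_cases b₁ <;>
    norm_num [Fin.sum_univ_two, Fin.prod_univ_two, next, value, fit, spin]

end

end FactoredBellmanCounterexample

open FactoredBellmanCounterexample in
/-- The empirical Bellman operator with minimization over additively factorized
value functions is not a γ-contraction in sup norm: there is a finite MMDP,
γ ∈ (0,1), and factorized Q, Q' whose updates violate the contraction bound. -/
theorem stmt14 :
    ∃ (nS nA nAg : ℕ), 0 < nS ∧ 0 < nA ∧ 0 < nAg ∧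
    ∃ (γ : ℝ), 0 < γ ∧ γ < 1 ∧
    ∃ (r : Fin nS → (Fin nAg → Fin nA) → ℝ)
      (T : Fin nS → (Fin nAg → Fin nA) → Fin nS)
      (Q Q' Qn Qn' : Fin nAg → Fin nS → Fin nA → ℝ) (C : ℝ),
      -- Qn minimizes the uniform-weighted squared error to the Bellman target of Q
      (∀ X : Fin nAg → Fin nS → Fin nA → ℝ,
        ∑ s, ∑ a : Fin nAg → Fin nA,
          ((r s a + γ * ⨆ a' : Fin nAg → Fin nA, ∑ i, Q i (T s a) (a' i))
            - ∑ i, Qn i s (a i)) ^ 2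
          ≤ ∑ s, ∑ a : Fin nAg → Fin nA,
            ((r s a + γ * ⨆ a' : Fin nAg → Fin nA, ∑ i, Q i (T s a) (a' i))
              - ∑ i, X i s (a i)) ^ 2)
      -- Qn' minimizes the uniform-weighted squared error to the Bellman target of Q'
      ∧ (∀ X : Fin nAg → Fin nS → Fin nA → ℝ,
        ∑ s, ∑ a : Fin nAg → Fin nA,
          ((r s a + γ * ⨆ a' : Fin nAg → Fin nA, ∑ i, Q' i (T s a) (a' i))
            - ∑ i, Qn' i s (a i)) ^ 2
          ≤ ∑ s, ∑ a : Fin nAg → Fin nA,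
            ((r s a + γ * ⨆ a' : Fin nAg → Fin nA, ∑ i, Q' i (T s a) (a' i))
              - ∑ i, X i s (a i)) ^ 2)
      -- C bounds the sup distance of the factorized inputs
      ∧ (∀ (s : Fin nS) (a : Fin nAg → Fin nA),
          |(∑ i, Q i s (a i)) - ∑ i, Q' i s (a i)| ≤ C)
      -- but the outputs violate the γ-contraction bound
      ∧ ∃ (s : Fin nS) (a : Fin nAg → Fin nA),
          γ * C < |(∑ i, Qn i s (a i)) - ∑ i, Qn' i s (a i)| := by
  have hfit : IsFactoredLeastSquaresFit
      (bellmanTarget (fun _ _ => 0) (fun _ a => next a) (1 / 2) fun _ _ _ => 0) fun _ _ _ => 0 :=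
    isFactoredLeastSquaresFit_of_orthogonal _ _ fun s i g => by
      simp [bellmanTarget_of_action_independent (w := fun _ _ => (0 : ℝ))]
  have hfit' : IsFactoredLeastSquaresFit
      (bellmanTarget (fun _ _ => 0) (fun _ a => next a) (1 / 2) fun _ s _ => value s)
      fun _ _ b => fit b :=
    isFactoredLeastSquaresFit_of_orthogonal _ _ fun s i g => by
      simp_rw [bellmanTarget_of_action_independent (w := fun _ s => value s), zero_add,
        target_sub_fit, mul_assoc, ← mul_sum, sum_prod_mul_apply_eq_zero spin sum_spin, mul_zero]
  refine ⟨2, 2, 2, two_pos, two_pos, two_pos, 1 / 2, by norm_num, by norm_num,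
    fun _ _ => 0, fun _ a => next a, fun _ _ _ => 0, fun _ s _ => value s, fun _ _ _ => 0,
    fun _ _ b => fit b, 1, hfit, hfit', fun s a => ?_, 0, fun _ => 0, by norm_num [fit, spin]⟩
  fin_cases s <;> simp [value]
end
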